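/- arXiv:1810.05461 — 2 statements merged into one kernel-verified Lean document; each statement's English description precedes it below -/
import Mathlib

section
/- Let g, r1, d1, d2 be natural numbers with g ≥ 1, r1 ≥ 1, d1 ≥ g + r1 and d2 ≥ g + 2. In the polynomial ring ℤ[t1, t2], the coefficient of the monomial t1·t2^(r1) in the product (1 + t1)^(d1 − g − r1) · (1 + t2)^(d2 − g − 1) · (1 + t1 + t2)^g equals (d1 − r1)·C(d2 − 1, r1) − g·C(d2 − 2, r1 − 1), where C(n, k) denotes the binomial coefficient. -/
open MvPolynomial

namespace SeveriAux

open Finsupp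

noncomputable def P (a b g : ℕ) : MvPolynomial (Fin 2) ℤ :=
  (1 + X 0) ^ a * (1 + X 1) ^ b * (1 + X 0 + X 1) ^ g

lemma cX0 (p : MvPolynomial (Fin 2) ℤ) (j : ℕ) :
    coeff (single 0 1 + single 1 j) (p * X 0) = coeff (single 1 j) p := by
  rw [add_comm (single (0 : Fin 2) 1), coeff_mul_X]

lemma cX0M (p : MvPolynomial (Fin 2) ℤ) (j : ℕ) :
    coeff (single 1 j) (p * X 0) = 0 := by
  rw [coeff_mul_X', if_neg]
  simp [Finsupp.mem_support_iff, Finsupp.single_apply]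

lemma cX1 (p : MvPolynomial (Fin 2) ℤ) (j : ℕ) :
    coeff (single 0 1 + single 1 (j + 1)) (p * X 1)
      = coeff (single 0 1 + single 1 j) p := by
  have h : (single 0 1 + single 1 (j + 1) : Fin 2 →₀ ℕ)
      = (single 0 1 + single 1 j) + single 1 1 := by
    rw [Finsupp.single_add, add_assoc]
  rw [h, coeff_mul_X]

lemma cX1z (p : MvPolynomial (Fin 2) ℤ) :
    coeff (single 0 1 + single 1 0) (p * X 1) = 0 := by
  rw [coeff_mul_X', if_neg]
  simp [Finsupp.mem_support_iff, Finsupp.single_apply]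

lemma cX1M (p : MvPolynomial (Fin 2) ℤ) (j : ℕ) :
    coeff (single 1 (j + 1)) (p * X 1) = coeff (single 1 j) p := by
  have h : (single 1 (j + 1) : Fin 2 →₀ ℕ) = single 1 j + single 1 1 := by
    rw [Finsupp.single_add]
  rw [h, coeff_mul_X]

lemma cX1Mz (p : MvPolynomial (Fin 2) ℤ) :
    coeff (single 1 0) (p * X 1) = 0 := by
  rw [coeff_mul_X', if_neg]
  simp [Finsupp.mem_support_iff, Finsupp.single_apply]

-- coefficient of single 1 j in (1+X1)^b
lemma Mbase (b j : ℕ) :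
    coeff (single 1 j) ((1 + X 1 : MvPolynomial (Fin 2) ℤ) ^ b) = b.choose j := by
  induction b generalizing j with
  | zero =>
    cases j with
    | zero => simp
    | succ k =>
      rw [pow_zero, coeff_one, if_neg]
      · simp
      · intro h
        have := DFunLike.congr_fun h (1 : Fin 2)
        simp [Finsupp.single_apply] at this
  | succ b ih =>
    rw [pow_succ, mul_add, mul_one, coeff_add]
    cases j with
    | zero => rw [cX1Mz, ih 0]; simp
    | succ k =>
      rw [cX1M, ih (k + 1), ih k, Nat.choose_succ_succ]
      push_cast; ring

lemma Nbase0 (b j : ℕ) :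
    coeff (single 0 1 + single 1 j) ((1 + X 1 : MvPolynomial (Fin 2) ℤ) ^ b) = 0 := by
  induction b generalizing j with
  | zero =>
    rw [pow_zero, coeff_one, if_neg]
    intro h
    have := DFunLike.congr_fun h (0 : Fin 2)
    simp [Finsupp.single_apply] at this
  | succ b ih =>
    rw [pow_succ, mul_add, mul_one, coeff_add]
    cases j with
    | zero => rw [cX1z, ih 0]; simp
    | succ k => rw [cX1, ih (k + 1), ih k]; simp

-- coefficient of single 1 j in P a b g
lemma Mlem (a b g j : ℕ) :
    coeff (single 1 j) (P a b g) = (b + g).choose j := by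
  induction g generalizing j with
  | zero =>
    rw [Nat.add_zero]
    unfold P
    rw [pow_zero, mul_one]
    induction a with
    | zero => rw [pow_zero, one_mul]; exact Mbase b j
    | succ a iha =>
      have h : ((1 + X 0) ^ (a + 1) * (1 + X 1) ^ b : MvPolynomial (Fin 2) ℤ)
          = (1 + X 0) ^ a * (1 + X 1) ^ b * 1
            + (1 + X 0) ^ a * (1 + X 1) ^ b * X 0 := by ring
      rw [h, coeff_add, mul_one, cX0M, iha, add_zero]
  | succ g ih =>
    have h : P a b (g + 1) = P a b g * 1 + P a b g * X 0 + P a b g * X 1 := by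
      unfold P; ring
    rw [h, coeff_add, coeff_add, mul_one, cX0M, add_zero]
    cases j with
    | zero => rw [cX1Mz, ih 0]; simp
    | succ k =>
      rw [cX1M, ih (k + 1), ih k,
        show b + (g + 1) = (b + g) + 1 by ring, Nat.choose_succ_succ]
      push_cast; ring

-- coefficient of single 0 1 + single 1 j in P a b 0
lemma N0 (a b j : ℕ) :
    coeff (single 0 1 + single 1 j) (P a b 0) = a * b.choose j := by
  unfold P
  rw [pow_zero, mul_one]
  induction a with
  | zero => rw [pow_zero, one_mul, Nbase0]; simp
  | succ a iha =>
    have h : ((1 + X 0) ^ (a + 1) * (1 + X 1) ^ b : MvPolynomial (Fin 2) ℤ)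
        = (1 + X 0) ^ a * (1 + X 1) ^ b * 1
          + (1 + X 0) ^ a * (1 + X 1) ^ b * X 0 := by ring
    rw [h, coeff_add, mul_one, cX0, iha]
    have hm : coeff (single 1 j) ((1 + X 0) ^ a * (1 + X 1) ^ b : MvPolynomial (Fin 2) ℤ)
        = (b + 0).choose j := by
      have := Mlem a b 0 j
      unfold P at this
      rwa [pow_zero, mul_one] at this
    rw [hm, Nat.add_zero]
    push_cast; ring

lemma NS (a b g j : ℕ) :
    coeff (single 0 1 + single 1 j) (P a b (g + 1))
      = a * (b + g + 1).choose j + (g + 1) * (b + g).choose j := by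
  induction g generalizing j with
  | zero =>
    have h : P a b 1 = P a b 0 * 1 + P a b 0 * X 0 + P a b 0 * X 1 := by
      unfold P; ring
    rw [h, coeff_add, coeff_add, mul_one, cX0]
    have hm : ∀ j, coeff (single 1 j) (P a b 0) = b.choose j := by
      intro j; have := Mlem a b 0 j; rwa [Nat.add_zero] at this
    cases j with
    | zero =>
      rw [cX1z, N0, hm]
      simp
    | succ k =>
      rw [cX1, N0, N0, hm, Nat.add_zero, Nat.choose_succ_succ b k]
      push_cast [Nat.succ_eq_add_one]; ring_nf
  | succ g ih =>
    have h : P a b (g + 2) = P a b (g + 1) * 1 + P a b (g + 1) * X 0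
        + P a b (g + 1) * X 1 := by
      unfold P; ring
    rw [h, coeff_add, coeff_add, mul_one, cX0, Mlem]
    cases j with
    | zero =>
      rw [cX1z, ih 0]
      simp only [Nat.choose_zero_right]
      push_cast; ring
    | succ k =>
      rw [cX1, ih (k + 1), ih k,
        show b + (g + 1) = (b + g) + 1 by ring,
        Nat.choose_succ_succ (b + g + 1) k,
        Nat.choose_succ_succ (b + g) k]
      push_cast; ring

end SeveriAux

theorem coeff_severi_count (g r1 d1 d2 : ℕ) (hg : g ≥ 1) (hr : r1 ≥ 1)
    (h1 : d1 ≥ g + r1) (h2 : d2 ≥ g + 2) :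
    MvPolynomial.coeff (Finsupp.single 0 1 + Finsupp.single 1 r1)
      ((1 + X 0) ^ (d1 - g - r1) * (1 + X 1) ^ (d2 - g - 1) *
        (1 + X 0 + X 1) ^ g : MvPolynomial (Fin 2) ℤ)
    = ((d1 : ℤ) - (r1 : ℤ)) * (Nat.choose (d2 - 1) r1 : ℤ)
      - (g : ℤ) * (Nat.choose (d2 - 2) (r1 - 1) : ℤ) := by
  obtain ⟨g', rfl⟩ : ∃ g', g = g' + 1 := ⟨g - 1, by omega⟩
  obtain ⟨k, rfl⟩ : ∃ k, r1 = k + 1 := ⟨r1 - 1, by omega⟩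
  have key := SeveriAux.NS (d1 - (g' + 1) - (k + 1)) (d2 - (g' + 1) - 1) g' (k + 1)
  unfold SeveriAux.P at key
  rw [key]
  have hb1 : d2 - (g' + 1) - 1 + g' + 1 = d2 - 1 := by omega
  have hb2 : d2 - (g' + 1) - 1 + g' = d2 - 2 := by omega
  rw [hb1, hb2]
  have pascal : (d2 - 1).choose (k + 1)
      = (d2 - 2).choose k + (d2 - 2).choose (k + 1) := by
    rw [show d2 - 1 = (d2 - 2) + 1 by omega, Nat.choose_succ_succ]
  have ha : ((d1 - (g' + 1) - (k + 1) : ℕ) : ℤ)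
      = (d1 : ℤ) - (g' + 1) - (k + 1) := by omega
  rw [pascal, show k + 1 - 1 = k by omega, ha]
  push_cast
  ring
end

section
/- There do not exist a natural number r1 ≥ 1 and integers d1, ρ, e, x with ρ ≥ 0 satisfying all three of the following inequalities: (i) r1·e ≤ d1 − (r1 + 1)·ρ − r1·(r1 + 1); (ii) 2·x ≤ 2·d1 − r1·(r1 + 1); (iii) 2·r1·((r1 + 2)·(d1 + e) − e − x) − r1·(r1 + 1)·(r1 + 2) ≤ 2·r1·(r1 + 2)·(d1 + e − 1 − r1) − 2·(r1 + 1)·(d1 − ρ − r1·(r1 + 1)). -/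
theorem no_solution_inequality_system :
    ¬ ∃ (r1 : ℕ) (d1 ρ e x : ℤ), r1 ≥ 1 ∧ ρ ≥ 0 ∧
      (r1 : ℤ) * e ≤ d1 - ((r1 : ℤ) + 1) * ρ - (r1 : ℤ) * ((r1 : ℤ) + 1) ∧
      2 * x ≤ 2 * d1 - (r1 : ℤ) * ((r1 : ℤ) + 1) ∧
      2 * (r1 : ℤ) * (((r1 : ℤ) + 2) * (d1 + e) - e - x)
          - (r1 : ℤ) * ((r1 : ℤ) + 1) * ((r1 : ℤ) + 2)
        ≤ 2 * (r1 : ℤ) * ((r1 : ℤ) + 2) * (d1 + e - 1 - (r1 : ℤ))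
          - 2 * ((r1 : ℤ) + 1) * (d1 - ρ - (r1 : ℤ) * ((r1 : ℤ) + 1)) := by
  rintro ⟨r1, d1, ρ, e, x, hr, hρ, h1, h2, h3⟩
  have hr' : (1 : ℤ) ≤ (r1 : ℤ) := by exact_mod_cast hr
  nlinarith [mul_nonneg (sub_nonneg.mpr hr') hρ, mul_le_mul_of_nonneg_left h1 (by linarith : (0:ℤ) ≤ 2), mul_le_mul_of_nonneg_left h2 (by linarith : (0:ℤ) ≤ (r1:ℤ))]
end
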